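/- Let G be a finite group, p a prime, and x, y, z ∈ G. If the p-defect of the conjugacy class of y is strictly less than that of z (i.e., the p-part of |C_G(y)| is strictly smaller than the p-part of |C_G(z)|), then p divides the class algebra structure constant a(x,y,z). -/
import Mathlib


/-- The class algebra structure constant `a(x,y,z)`. -/
noncomputable def classConst (G : Type*) [Group G] (x y z : G) : ℕ :=
  Nat.card {p : G × G // IsConj x p.1 ∧ IsConj y p.2 ∧ p.1 * p.2 = z}

private lemma card_centralizer_congr {G : Type*} [Group G] {a b : G} (h : IsConj a b) :
    Nat.card (Subgroup.centralizer ({a} : Set G)) =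
      Nat.card (Subgroup.centralizer ({b} : Set G)) := by
  obtain ⟨c, hc⟩ := isConj_iff.mp h
  have key : ∀ u v : G, c * (u * v) * c⁻¹ = (c * u * c⁻¹) * (c * v * c⁻¹) := by
    intro u v; group
  have key' : ∀ u v : G, c⁻¹ * (u * v) * c = (c⁻¹ * u * c) * (c⁻¹ * v * c) := by
    intro u v; group
  have ha : a = c⁻¹ * b * c := by rw [← hc]; group
  refine Nat.card_congr ⟨fun g => ⟨c * g * c⁻¹, ?_⟩, fun g => ⟨c⁻¹ * g * c, ?_⟩, ?_, ?_⟩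
  · rw [Subgroup.mem_centralizer_iff]
    rintro m (rfl : m = b)
    rw [← hc, ← key, ← key, Subgroup.mem_centralizer_iff.mp g.2 a rfl]
  · rw [Subgroup.mem_centralizer_iff]
    rintro m (rfl : m = a)
    rw [ha, ← key', ← key', Subgroup.mem_centralizer_iff.mp g.2 b rfl]
  · intro g; exact Subtype.ext (by simp only []; group)
  · intro g; exact Subtype.ext (by simp only []; group)

/-- If the `p`-defect of the class of `y` is strictly less than that of `z` (the `p`-part
of `|C_G(y)|` is smaller than that of `|C_G(z)|`), then `p` divides `a(x,y,z)`. -/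
theorem prime_dvd_classConst_of_defect_lt {G : Type*} [Group G] [Finite G] (p : ℕ)
    (hp : p.Prime) (x y z : G)
    (hdef : (Nat.card (Subgroup.centralizer {y})).factorization p <
      (Nat.card (Subgroup.centralizer {z})).factorization p) :
    p ∣ classConst G x y z := by
  classical
  haveI : Fact p.Prime := ⟨hp⟩
  set H := Subgroup.centralizer ({z} : Set G) with hH
  letI : MulAction H {q : G × G // IsConj x q.1 ∧ IsConj y q.2 ∧ q.1 * q.2 = z} :=
  { smul := fun g a => ⟨((g : G) * a.1.1 * (g : G)⁻¹, (g : G) * a.1.2 * (g : G)⁻¹), by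
      obtain ⟨h1, h2, h3⟩ := a.2
      refine ⟨h1.trans (isConj_iff.mpr ⟨g, rfl⟩), h2.trans (isConj_iff.mpr ⟨g, rfl⟩), ?_⟩
      have hz : z * (g : G) = (g : G) * z := Subgroup.mem_centralizer_iff.mp g.2 z rfl
      have : (g : G) * a.1.1 * (g : G)⁻¹ * ((g : G) * a.1.2 * (g : G)⁻¹)
          = (g : G) * (a.1.1 * a.1.2) * (g : G)⁻¹ := by group
      rw [this, h3, ← hz, mul_inv_cancel_right]⟩
    one_smul := fun a => by
      apply Subtype.ext
      show ((((1 : H) : G) * a.1.1 * ((1 : H) : G)⁻¹,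
        ((1 : H) : G) * a.1.2 * ((1 : H) : G)⁻¹) : G × G) = a.1
      simp
    mul_smul := fun g h a => by
      apply Subtype.ext
      show ((((g * h : H) : G) * a.1.1 * ((g * h : H) : G)⁻¹,
          ((g * h : H) : G) * a.1.2 * ((g * h : H) : G)⁻¹) : G × G)
        = ((g : G) * ((h : G) * a.1.1 * (h : G)⁻¹) * (g : G)⁻¹,
          (g : G) * ((h : G) * a.1.2 * (h : G)⁻¹) * (g : G)⁻¹)
      simp [mul_assoc] }
  obtain ⟨P⟩ : Nonempty (Sylow p H) := inferInstance
  have hfix : IsEmpty (MulAction.fixedPoints (P : Subgroup H) {q : G × G // IsConj x q.1 ∧ IsConj y q.2 ∧ q.1 * q.2 = z}) := by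
    rw [isEmpty_iff]
    rintro ⟨⟨⟨a₁, a₂⟩, h1, h2, h3⟩, hfa⟩
    have hsub : (P : Subgroup H).map H.subtype ≤ Subgroup.centralizer ({a₂} : Set G) := by
      rintro - ⟨g, hg, rfl⟩
      show (g : G) ∈ Subgroup.centralizer ({a₂} : Set G)
      rw [Subgroup.mem_centralizer_iff]
      rintro m hm
      rw [Set.mem_singleton_iff] at hm
      have heq := hfa ⟨g, hg⟩
      have h2' : (g : G) * a₂ * (g : G)⁻¹ = a₂ := by
        have h := congrArg (fun q : {q : G × G // IsConj x q.1 ∧ IsConj y q.2 ∧ q.1 * q.2 = z} => q.1.2) heq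
        simp only [Subgroup.mk_smul] at h
        exact h
      calc m * (g : G) = (g : G) * a₂ * (g : G)⁻¹ * (g : G) := by rw [hm, h2']
        _ = (g : G) * m := by rw [hm]; group
    have hcardmap : Nat.card (P : Subgroup H) = Nat.card ((P : Subgroup H).map H.subtype) :=
      Nat.card_congr (Subgroup.equivMapOfInjective _ _ H.subtype_injective).toEquiv
    have hdvd : Nat.card (P : Subgroup H) ∣ Nat.card (Subgroup.centralizer ({a₂} : Set G)) := by
      rw [hcardmap]
      exact Subgroup.card_dvd_of_le hsub
    rw [P.card_eq_multiplicity, ← card_centralizer_congr h2] at hdvd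
    have hne : Nat.card (Subgroup.centralizer ({y} : Set G)) ≠ 0 := Nat.card_pos.ne'
    have := (Nat.Prime.pow_dvd_iff_le_factorization hp hne).mp hdvd
    omega
  have hmod := P.isPGroup'.card_modEq_card_fixedPoints {q : G × G // IsConj x q.1 ∧ IsConj y q.2 ∧ q.1 * q.2 = z}
  have h0 : Nat.card (MulAction.fixedPoints (P : Subgroup H) {q : G × G // IsConj x q.1 ∧ IsConj y q.2 ∧ q.1 * q.2 = z}) = 0 :=
    @Nat.card_of_isEmpty _ hfix
  rw [h0] at hmod
  exact Nat.modEq_zero_iff_dvd.mp hmod
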